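/- arXiv:2006.15352 — 9 statements merged into one kernel-verified Lean document; each statement's English description precedes it below -/
import Mathlib

section
/- For all complex ξ₁, ξ₂, p, q, η with Re(ξ₁) > 0, Re(ξ₂) > 0, Re(p) > 0, Re(q) > 0 and Re(η) > -1, the extended beta function admits the trigonometric integral representation B_η^{p,q}(ξ₁,ξ₂) = 2 ∫₀^{π/2} (cos t)^{2ξ₁-1} (sin t)^{2ξ₂-1} S_η(-p sec²t) S_η(-q csc²t) dt. -/
open MeasureTheory Complex

/-- The Bessel–Struve kernel function, defined by its power series. -/
noncomputable def besselStruve (η t : ℂ) : ℂ :=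
  (Complex.Gamma (η + 1) / (Real.sqrt Real.pi : ℂ)) *
    ∑' m : ℕ, t ^ m * Complex.Gamma (((m : ℂ) + 1) / 2) /
      ((m.factorial : ℂ) * Complex.Gamma ((m : ℂ) / 2 + η + 1))

/-- The extended beta function `B_η^{p,q}(ξ₁, ξ₂)`. -/
noncomputable def extBeta (η p q ξ₁ ξ₂ : ℂ) : ℂ :=
  ∫ y in (0:ℝ)..1, (y : ℂ) ^ (ξ₁ - 1) * ((1 : ℂ) - (y : ℂ)) ^ (ξ₂ - 1) *
    besselStruve η (-p / (y : ℂ)) * besselStruve η (-q / (1 - (y : ℂ)))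

/-- The Pochhammer symbol `(a)_l = Γ(a + l)/Γ(a)`. -/
noncomputable def poch (a : ℂ) (l : ℕ) : ℂ := Complex.Gamma (a + l) / Complex.Gamma a

/-- The extended Gauss hypergeometric function `F_η^{p,q}(ξ₁, ξ₂; ξ₃; x)`. -/
noncomputable def extF (η p q ξ₁ ξ₂ ξ₃ x : ℂ) : ℂ :=
  ∑' l : ℕ, poch ξ₁ l * extBeta η p q (ξ₂ + l) (ξ₃ - ξ₂) * x ^ l /
    (Complex.betaIntegral ξ₂ (ξ₃ - ξ₂) * (l.factorial : ℂ))

/-- The extended confluent hypergeometric function `Φ_η^{p,q}(ξ₂; ξ₃; x)`. -/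
noncomputable def extPhi (η p q ξ₂ ξ₃ x : ℂ) : ℂ :=
  ∑' l : ℕ, extBeta η p q (ξ₂ + l) (ξ₃ - ξ₂) * x ^ l /
    (Complex.betaIntegral ξ₂ (ξ₃ - ξ₂) * (l.factorial : ℂ))

/-! The substitution `y = cos² t` maps `(0, π/2)` decreasingly onto `(0, 1)` with
`dy = -2 cos t sin t dt`; on `(0, π/2)` the powers `y ^ (ξ₁ - 1)` and `(1 - y) ^ (ξ₂ - 1)` become
`(cos t) ^ (2ξ₁ - 2)` and `(sin t) ^ (2ξ₂ - 2)` because `cos t` and `sin t` are positive there. -/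

theorem Complex.ofReal_cpow_two_mul_sub_one {x : ℝ} (hx : 0 < x) (s : ℂ) :
    (x : ℂ) ^ (2 * s - 1) = ((x : ℂ) ^ 2) ^ (s - 1) * x := by
  have hx0 : (x : ℂ) ≠ 0 := ofReal_ne_zero.2 hx.ne'
  rw [show 2 * s - 1 = (s - 1) + (s - 1) + 1 by ring, cpow_add _ _ hx0, cpow_add _ _ hx0,
    cpow_one, sq, mul_cpow_ofReal_nonneg hx.le hx.le]

theorem intervalIntegral.integral_zero_one_eq_integral_cos_sq {E : Type*}
    [NormedAddCommGroup E] [NormedSpace ℝ E] (g : ℝ → E) :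
    ∫ y in (0:ℝ)..1, g y =
      ∫ t in (0:ℝ)..(Real.pi / 2), (2 * Real.cos t * Real.sin t) • g (Real.cos t ^ 2) := by
  have hpi : (0:ℝ) ≤ Real.pi / 2 := by positivity
  have hsubst := intervalIntegral.integral_deriv_smul_comp_of_deriv_nonpos (g := g)
    (f := fun t => Real.cos t ^ 2) (f' := fun t => -(2 * Real.cos t * Real.sin t))
    (by fun_prop)
    (fun t _ => ((Real.hasDerivAt_cos t).fun_pow 2).congr_deriv (by norm_num))
    (fun t ht => by
      rw [min_eq_left hpi, max_eq_right hpi] at ht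
      have hcos := Real.cos_nonneg_of_mem_Icc ⟨by linarith [ht.1], ht.2.le⟩
      have hsin := Real.sin_nonneg_of_nonneg_of_le_pi ht.1.le (by linarith [ht.2, Real.pi_pos])
      exact neg_nonpos.2 (by positivity))
  simp only [Function.comp_apply, neg_smul, intervalIntegral.integral_neg, Real.cos_zero,
    Real.cos_pi_div_two, one_pow, zero_pow two_ne_zero] at hsubst
  rw [intervalIntegral.integral_symm, ← hsubst, neg_neg]

open Set in
theorem extBeta_trig_repr_general (ξ₁ ξ₂ p q η : ℂ) :
    extBeta η p q ξ₁ ξ₂ =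
      2 * ∫ t in (0:ℝ)..(Real.pi / 2),
        (Real.cos t : ℂ) ^ (2 * ξ₁ - 1) * (Real.sin t : ℂ) ^ (2 * ξ₂ - 1) *
          besselStruve η (-p / (Real.cos t : ℂ) ^ 2) *
          besselStruve η (-q / (Real.sin t : ℂ) ^ 2) := by
  rw [extBeta, intervalIntegral.integral_zero_one_eq_integral_cos_sq,
    ← intervalIntegral.integral_const_mul]
  refine intervalIntegral.integral_congr_Ioo_of_le (by positivity) fun t ht => ?_
  have hcos : 0 < Real.cos t := Real.cos_pos_of_mem_Ioo ⟨by linarith [ht.1, Real.pi_pos], ht.2⟩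
  have hsin : 0 < Real.sin t := Real.sin_pos_of_pos_of_lt_pi ht.1 (by linarith [ht.2, Real.pi_pos])
  have hpyth : (1 : ℂ) - (Real.cos t : ℂ) ^ 2 = (Real.sin t : ℂ) ^ 2 := by
    have : (Real.sin t : ℂ) ^ 2 + (Real.cos t : ℂ) ^ 2 = 1 := by
      exact_mod_cast Real.sin_sq_add_cos_sq t
    linear_combination -this
  simp only [Complex.real_smul, Complex.ofReal_mul, Complex.ofReal_pow, Complex.ofReal_ofNat]
  rw [hpyth, ofReal_cpow_two_mul_sub_one hcos, ofReal_cpow_two_mul_sub_one hsin]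
  ring

theorem extBeta_trig_repr (ξ₁ ξ₂ p q η : ℂ)
    (h1 : 0 < ξ₁.re) (h2 : 0 < ξ₂.re) (hp : 0 < p.re) (hq : 0 < q.re) (hη : -1 < η.re) :
    extBeta η p q ξ₁ ξ₂ =
      2 * ∫ t in (0:ℝ)..(Real.pi / 2),
        (Real.cos t : ℂ) ^ (2 * ξ₁ - 1) * (Real.sin t : ℂ) ^ (2 * ξ₂ - 1) *
          besselStruve η (-p / (Real.cos t : ℂ) ^ 2) *
          besselStruve η (-q / (Real.sin t : ℂ) ^ 2) :=
  extBeta_trig_repr_general ξ₁ ξ₂ p q η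
end

section
/- For all complex ξ₁, ξ₂, p, q, η with Re(ξ₁) > 0, Re(ξ₂) > 0, Re(p) > 0, Re(q) > 0 and Re(η) > -1, the extended beta function admits the integral representation over the half-line B_η^{p,q}(ξ₁,ξ₂) = ∫₀^∞ w^{ξ₁-1} (1+w)^{-(ξ₁+ξ₂)} S_η(-p(1+w)/w) S_η(-q(1+w)) dw. -/
open MeasureTheory Complex

/-!
The substitution `y = w / (1 + w)` maps `(0, ∞)` bijectively onto `(0, 1)`, with `1 - y = 1 / (1 + w)`
and `dy = dw / (1 + w)²`. It turns `y^(ξ₁-1) (1-y)^(ξ₂-1) dy` into `w^(ξ₁-1) (1+w)^(-(ξ₁+ξ₂)) dw`,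
while the Bessel–Struve arguments `-p/y` and `-q/(1-y)` become `-p(1+w)/w` and `-q(1+w)`.
-/

open Set

lemma image_div_one_add_Ioi : (fun w : ℝ => w / (1 + w)) '' Ioi 0 = Ioo 0 1 := by
  ext y
  constructor
  · rintro ⟨w, hw : 0 < w, rfl⟩
    exact ⟨by positivity, (div_lt_one (by positivity)).2 (by linarith)⟩
  · rintro ⟨hy0, hy1⟩
    have h1y : 0 < 1 - y := by linarith
    refine ⟨y / (1 - y), div_pos hy0 h1y, ?_⟩
    field_simp
    ring

lemma injOn_div_one_add_Ioi : InjOn (fun w : ℝ => w / (1 + w)) (Ioi 0) := by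
  intro a (ha : 0 < a) b (hb : 0 < b) hab
  have ha1 : 1 + a ≠ 0 := by positivity
  have hb1 : 1 + b ≠ 0 := by positivity
  field_simp at hab
  linarith

lemma hasDerivAt_div_one_add {w : ℝ} (hw : 1 + w ≠ 0) :
    HasDerivAt (fun w : ℝ => w / (1 + w)) ((1 + w) ^ 2)⁻¹ w := by
  rw [show ((1 + w) ^ 2)⁻¹ = (1 * (1 + w) - w * 1) / (1 + w) ^ 2 by field_simp; ring]
  exact (hasDerivAt_id' w).div ((hasDerivAt_id' w).const_add 1) hw

theorem intervalIntegral_zero_one_eq_integral_Ioi {E : Type*} [NormedAddCommGroup E]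
    [NormedSpace ℝ E] (f : ℝ → E) :
    ∫ y in (0:ℝ)..1, f y = ∫ w in Ioi 0, ((1 + w) ^ 2)⁻¹ • f (w / (1 + w)) := by
  rw [intervalIntegral.integral_of_le zero_le_one, integral_Ioc_eq_integral_Ioo,
    ← image_div_one_add_Ioi, integral_image_eq_integral_abs_deriv_smul measurableSet_Ioi
      (fun w (hw : 0 < w) => (hasDerivAt_div_one_add (by positivity)).hasDerivWithinAt)
      injOn_div_one_add_Ioi]
  refine setIntegral_congr_fun measurableSet_Ioi fun w (hw : 0 < w) => ?_
  rw [abs_of_pos (by positivity)]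

lemma beta_integrand_comp_div_one_add {w : ℝ} (hw : 0 < w) (a b c : ℂ) :
    ((1 + w) ^ 2)⁻¹ • ((((w / (1 + w) : ℝ)) : ℂ) ^ (a - 1) *
        (1 - ((w / (1 + w) : ℝ) : ℂ)) ^ (b - 1) * c) =
      (w : ℂ) ^ (a - 1) * (1 + (w : ℂ)) ^ (-(a + b)) * c := by
  have h1w : (0 : ℝ) < 1 + w := by positivity
  have hB : (1 : ℂ) + w ≠ 0 := by exact_mod_cast h1w.ne'
  have hcast : (((1 + w : ℝ)) : ℂ) = 1 + w := by push_cast; ring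
  have hy : (((w / (1 + w) : ℝ)) : ℂ) ^ (a - 1) = (w : ℂ) ^ (a - 1) / (1 + (w : ℂ)) ^ (a - 1) := by
    rw [ofReal_div, div_cpow_ofReal_nonneg hw.le h1w.le, hcast]
  have hy' : (1 - ((w / (1 + w) : ℝ) : ℂ)) ^ (b - 1) = ((1 + (w : ℂ)) ^ (b - 1))⁻¹ := by
    rw [← hcast, ← inv_cpow_ofReal_nonneg h1w.le]
    congr 1
    push_cast
    field_simp
    ring
  have hexp : (1 + (w : ℂ)) ^ (a + b) =
      (1 + (w : ℂ)) ^ (a - 1) * (1 + (w : ℂ)) ^ (b - 1) * (1 + (w : ℂ)) ^ (2 : ℕ) := by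
    rw [← cpow_natCast, ← cpow_add _ _ hB, ← cpow_add _ _ hB]
    ring_nf
  rw [hy, hy', cpow_neg, hexp, real_smul]
  push_cast
  field_simp

theorem intervalIntegral_beta_kernel_eq_integral_Ioi (a b : ℂ) (f g : ℂ → ℂ) :
    ∫ y in (0:ℝ)..1, (y : ℂ) ^ (a - 1) * (1 - (y : ℂ)) ^ (b - 1) * f y * g (1 - y) =
      ∫ w in Ioi (0:ℝ), (w : ℂ) ^ (a - 1) * (1 + (w : ℂ)) ^ (-(a + b)) *
        f (w / (1 + w)) * g (1 + w)⁻¹ := by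
  rw [intervalIntegral_zero_one_eq_integral_Ioi]
  refine setIntegral_congr_fun measurableSet_Ioi fun w (hw : 0 < w) => ?_
  have h1w : (1 : ℂ) + w ≠ 0 := by exact_mod_cast (show 1 + w ≠ 0 by positivity)
  have hg : (1 : ℂ) - (w / (1 + w) : ℝ) = (1 + (w : ℂ))⁻¹ := by
    push_cast
    field_simp
    ring
  have hf : (((w / (1 + w) : ℝ)) : ℂ) = w / (1 + w) := by push_cast; rfl
  have := beta_integrand_comp_div_one_add hw a b (f (w / (1 + w)) * g (1 + w)⁻¹)
  rw [hg, hf] at this ⊢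
  simpa only [mul_assoc] using this

theorem extBeta_halfline_repr_general (ξ₁ ξ₂ p q η : ℂ) :
    extBeta η p q ξ₁ ξ₂ =
      ∫ w in Set.Ioi (0:ℝ),
        (w : ℂ) ^ (ξ₁ - 1) * ((1 : ℂ) + (w : ℂ)) ^ (-(ξ₁ + ξ₂)) *
          besselStruve η (-(p * (1 + (w : ℂ))) / (w : ℂ)) *
          besselStruve η (-(q * (1 + (w : ℂ)))) := by
  rw [extBeta, intervalIntegral_beta_kernel_eq_integral_Ioi ξ₁ ξ₂
    (fun y => besselStruve η (-p / y)) (fun z => besselStruve η (-q / z))]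
  refine setIntegral_congr_fun measurableSet_Ioi fun w (hw : 0 < w) => ?_
  have hw' : (w : ℂ) ≠ 0 := by exact_mod_cast hw.ne'
  have h1w : (1 : ℂ) + w ≠ 0 := by exact_mod_cast (show 1 + w ≠ 0 by positivity)
  congr 3 <;> field_simp

theorem extBeta_halfline_repr (ξ₁ ξ₂ p q η : ℂ)
    (h1 : 0 < ξ₁.re) (h2 : 0 < ξ₂.re) (hp : 0 < p.re) (hq : 0 < q.re) (hη : -1 < η.re) :
    extBeta η p q ξ₁ ξ₂ =
      ∫ w in Set.Ioi (0:ℝ),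
        (w : ℂ) ^ (ξ₁ - 1) * ((1 : ℂ) + (w : ℂ)) ^ (-(ξ₁ + ξ₂)) *
          besselStruve η (-(p * (1 + (w : ℂ))) / (w : ℂ)) *
          besselStruve η (-(q * (1 + (w : ℂ)))) :=
  extBeta_halfline_repr_general ξ₁ ξ₂ p q η
end

section
/- For all complex ξ₁, ξ₂, p, q, η with Re(ξ₁) > 0, Re(ξ₂) > 0, Re(p) > 0, Re(q) > 0 and Re(η) > -1, the extended beta function admits the integral representation B_η^{p,q}(ξ₁,ξ₂) = 2^{1-ξ₁-ξ₂} ∫_{-1}^{1} (1+w)^{ξ₁-1} (1-w)^{ξ₂-1} S_η(-2p/(1+w)) S_η(-2q/(1-w)) dw. -/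
open MeasureTheory Complex

theorem extBeta_symmetric_interval_repr (ξ₁ ξ₂ p q η : ℂ)
    (h1 : 0 < ξ₁.re) (h2 : 0 < ξ₂.re) (hp : 0 < p.re) (hq : 0 < q.re) (hη : -1 < η.re) :
    extBeta η p q ξ₁ ξ₂ =
      (2 : ℂ) ^ (1 - ξ₁ - ξ₂) * ∫ w in (-1:ℝ)..1,
        ((1 : ℂ) + (w : ℂ)) ^ (ξ₁ - 1) * ((1 : ℂ) - (w : ℂ)) ^ (ξ₂ - 1) *
          besselStruve η (-(2 * p) / (1 + (w : ℂ))) *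
          besselStruve η (-(2 * q) / (1 - (w : ℂ))) := by
  set f : ℝ → ℂ := fun y => (y : ℂ) ^ (ξ₁ - 1) * ((1 : ℂ) - (y : ℂ)) ^ (ξ₂ - 1) *
    besselStruve η (-p / (y : ℂ)) * besselStruve η (-q / (1 - (y : ℂ))) with hf
  have hsub := intervalIntegral.smul_integral_comp_mul_add (a := (-1:ℝ)) (b := 1)
      f (1/2 : ℝ) (1/2 : ℝ)
  have hb1 : (1/2 : ℝ) * (-1) + 1/2 = 0 := by norm_num
  have hb2 : (1/2 : ℝ) * 1 + 1/2 = 1 := by norm_num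
  rw [hb1, hb2] at hsub
  have hEB : extBeta η p q ξ₁ ξ₂ = ∫ y in (0:ℝ)..1, f y := rfl
  -- pointwise equality on uIcc
  have hcong : ∀ w ∈ Set.uIcc (-1:ℝ) 1, f ((1/2 : ℝ) * w + 1/2) =
      (2 : ℂ) ^ (2 - ξ₁ - ξ₂) *
        (((1 : ℂ) + (w : ℂ)) ^ (ξ₁ - 1) * ((1 : ℂ) - (w : ℂ)) ^ (ξ₂ - 1) *
          besselStruve η (-(2 * p) / (1 + (w : ℂ))) *
          besselStruve η (-(2 * q) / (1 - (w : ℂ)))) := by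
    intro w hw
    rw [Set.uIcc_of_le (by norm_num)] at hw
    obtain ⟨hw1, hw2⟩ := hw
    have ha : (0:ℝ) ≤ 1 + w := by linarith
    have hb : (0:ℝ) ≤ 1 - w := by linarith
    have e1 : (((1/2 : ℝ) * w + 1/2 : ℝ) : ℂ) = ((1 + w : ℝ) : ℂ) * ((1/2 : ℝ) : ℂ) := by
      push_cast; ring
    have e2 : (1 : ℂ) - (((1/2 : ℝ) * w + 1/2 : ℝ) : ℂ) = ((1 - w : ℝ) : ℂ) * ((1/2 : ℝ) : ℂ) := by
      push_cast; ring
    have c1 : (((1/2 : ℝ) * w + 1/2 : ℝ) : ℂ) ^ (ξ₁ - 1)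
        = ((1 + w : ℝ) : ℂ) ^ (ξ₁ - 1) * ((1/2 : ℝ) : ℂ) ^ (ξ₁ - 1) := by
      rw [e1, mul_cpow_ofReal_nonneg ha (by norm_num)]
    have c2 : ((1 : ℂ) - (((1/2 : ℝ) * w + 1/2 : ℝ) : ℂ)) ^ (ξ₂ - 1)
        = ((1 - w : ℝ) : ℂ) ^ (ξ₂ - 1) * ((1/2 : ℝ) : ℂ) ^ (ξ₂ - 1) := by
      rw [e2, mul_cpow_ofReal_nonneg hb (by norm_num)]
    have chalf : ((1/2 : ℝ) : ℂ) ^ (ξ₁ - 1) * ((1/2 : ℝ) : ℂ) ^ (ξ₂ - 1)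
        = (2 : ℂ) ^ (2 - ξ₁ - ξ₂) := by
      rw [← Complex.cpow_add _ _ (by norm_num)]
      rw [show ((1/2 : ℝ) : ℂ) = (2 : ℂ)⁻¹ by norm_num,
        Complex.inv_cpow _ _ (by simp [Complex.arg_eq_pi_iff]; exact Real.pi_ne_zero.symm), ← Complex.cpow_neg]
      congr 1; ring
    have a1 : -p / (((1/2 : ℝ) * w + 1/2 : ℝ) : ℂ) = -(2 * p) / (1 + (w : ℂ)) := by
      push_cast
      rw [show ((1:ℂ)/2 * w + 1/2) = (1 + (w:ℂ)) / 2 by ring, div_div_eq_mul_div]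
      ring_nf
    have a2 : -q / (1 - (((1/2 : ℝ) * w + 1/2 : ℝ) : ℂ)) = -(2 * q) / (1 - (w : ℂ)) := by
      push_cast
      rw [show ((1:ℂ) - (1/2 * w + 1/2)) = (1 - (w:ℂ)) / 2 by ring, div_div_eq_mul_div]
      ring_nf
    simp only [hf, c1, c2, a1, a2]
    rw [← chalf]
    push_cast
    ring
  have hint : (∫ w in (-1:ℝ)..1, f ((1/2 : ℝ) * w + 1/2)) =
      (2 : ℂ) ^ (2 - ξ₁ - ξ₂) * ∫ w in (-1:ℝ)..1,
        ((1 : ℂ) + (w : ℂ)) ^ (ξ₁ - 1) * ((1 : ℂ) - (w : ℂ)) ^ (ξ₂ - 1) *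
          besselStruve η (-(2 * p) / (1 + (w : ℂ))) *
          besselStruve η (-(2 * q) / (1 - (w : ℂ))) := by
    rw [intervalIntegral.integral_congr hcong, intervalIntegral.integral_const_mul]
  rw [hEB, ← hsub, hint]
  rw [show (2 : ℂ) ^ (2 - ξ₁ - ξ₂) = 2 * (2 : ℂ) ^ (1 - ξ₁ - ξ₂) by
    rw [show (2 - ξ₁ - ξ₂ : ℂ) = 1 + (1 - ξ₁ - ξ₂) by ring,
      Complex.cpow_add _ _ (by norm_num), Complex.cpow_one]]
  rw [Complex.real_smul]
  push_cast
  ring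
end

section
/- For all real a < c and all complex ξ₁, ξ₂, p, q, η with Re(ξ₁) > 0, Re(ξ₂) > 0, Re(p) > 0, Re(q) > 0 and Re(η) > -1, the extended beta function admits the integral representation B_η^{p,q}(ξ₁,ξ₂) = (c-a)^{1-ξ₁-ξ₂} ∫_a^c (w-a)^{ξ₁-1} (c-w)^{ξ₂-1} S_η(-p(c-a)/(w-a)) S_η(-q(c-a)/(c-w)) dw. -/
open MeasureTheory Complex

theorem extBeta_general_interval_repr (a c : ℝ) (hac : a < c) (ξ₁ ξ₂ p q η : ℂ)
    (h1 : 0 < ξ₁.re) (h2 : 0 < ξ₂.re) (hp : 0 < p.re) (hq : 0 < q.re) (hη : -1 < η.re) :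
    extBeta η p q ξ₁ ξ₂ =
      ((c : ℂ) - (a : ℂ)) ^ (1 - ξ₁ - ξ₂) * ∫ w in a..c,
        ((w : ℂ) - (a : ℂ)) ^ (ξ₁ - 1) * ((c : ℂ) - (w : ℂ)) ^ (ξ₂ - 1) *
          besselStruve η (-(p * ((c : ℂ) - (a : ℂ))) / ((w : ℂ) - (a : ℂ))) *
          besselStruve η (-(q * ((c : ℂ) - (a : ℂ))) / ((c : ℂ) - (w : ℂ))) := by
  have hk : (0:ℝ) < c - a := by linarith
  have hd : ((c:ℂ) - (a:ℂ)) ≠ 0 := by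
    rw [← Complex.ofReal_sub]
    exact_mod_cast hk.ne'
  set d : ℂ := (c:ℂ) - (a:ℂ) with hdef
  set F : ℝ → ℂ := fun w =>
    ((w : ℂ) - (a : ℂ)) ^ (ξ₁ - 1) * ((c : ℂ) - (w : ℂ)) ^ (ξ₂ - 1) *
      besselStruve η (-(p * d) / ((w : ℂ) - (a : ℂ))) *
      besselStruve η (-(q * d) / ((c : ℂ) - (w : ℂ))) with hF
  have hsub : (∫ w in a..c, F w) = (c - a) • ∫ y in (0:ℝ)..1, F ((c - a) * y + a) := by
    rw [intervalIntegral.smul_integral_comp_mul_add F (c - a) a]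
    norm_num
  have hpt : ∀ y ∈ Set.uIcc (0:ℝ) 1,
      F ((c - a) * y + a) =
        (d ^ (ξ₁ - 1) * d ^ (ξ₂ - 1)) *
          ((y : ℂ) ^ (ξ₁ - 1) * ((1 : ℂ) - (y : ℂ)) ^ (ξ₂ - 1) *
            besselStruve η (-p / (y : ℂ)) * besselStruve η (-q / (1 - (y : ℂ)))) := by
    intro y hy
    rw [Set.uIcc_of_le (by norm_num : (0:ℝ) ≤ 1)] at hy
    obtain ⟨hy0, hy1⟩ := hy
    have e1 : ((((c - a) * y + a : ℝ)) : ℂ) - (a : ℂ) = d * (y : ℂ) := by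
      push_cast [hdef]; ring
    have e2 : (c : ℂ) - ((((c - a) * y + a : ℝ)) : ℂ) = d * ((1 : ℂ) - (y : ℂ)) := by
      push_cast [hdef]; ring
    have e3 : d * (y : ℂ) = (((c - a : ℝ)) : ℂ) * (y : ℂ) := by push_cast [hdef]; ring
    have e4 : d * ((1:ℂ) - (y:ℂ)) = (((c - a : ℝ)) : ℂ) * (((1 - y : ℝ)) : ℂ) := by
      push_cast [hdef]; ring
    have c1 : (d * (y : ℂ)) ^ (ξ₁ - 1) = d ^ (ξ₁ - 1) * (y : ℂ) ^ (ξ₁ - 1) := by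
      rw [e3, Complex.mul_cpow_ofReal_nonneg hk.le hy0]
      push_cast [hdef]; ring
    have c2 : (d * ((1:ℂ) - (y:ℂ))) ^ (ξ₂ - 1) = d ^ (ξ₂ - 1) * ((1:ℂ) - (y:ℂ)) ^ (ξ₂ - 1) := by
      rw [e4, Complex.mul_cpow_ofReal_nonneg hk.le (by linarith : (0:ℝ) ≤ 1 - y)]
      push_cast [hdef]; ring
    have b1 : -(p * d) / (d * (y : ℂ)) = -p / (y : ℂ) := by
      rw [show -(p * d) = d * (-p) by ring, mul_div_mul_left _ _ hd]
    have b2 : -(q * d) / (d * ((1:ℂ) - (y:ℂ))) = -q / ((1:ℂ) - (y:ℂ)) := by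
      rw [show -(q * d) = d * (-q) by ring, mul_div_mul_left _ _ hd]
    simp only [hF, e1, e2, c1, c2, b1, b2]
    ring
  rw [hsub, intervalIntegral.integral_congr hpt, intervalIntegral.integral_const_mul]
  rw [show (∫ y in (0:ℝ)..1, (y : ℂ) ^ (ξ₁ - 1) * ((1 : ℂ) - (y : ℂ)) ^ (ξ₂ - 1) *
      besselStruve η (-p / (y : ℂ)) * besselStruve η (-q / (1 - (y : ℂ)))) =
      extBeta η p q ξ₁ ξ₂ from rfl]
  rw [Complex.real_smul, Complex.ofReal_sub]
  have : d ^ (1 - ξ₁ - ξ₂) * (((c:ℂ) - (a:ℂ)) * (d ^ (ξ₁ - 1) * d ^ (ξ₂ - 1) * extBeta η p q ξ₁ ξ₂))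
      = (d ^ (1 - ξ₁ - ξ₂) * d ^ (1:ℂ) * d ^ (ξ₁ - 1) * d ^ (ξ₂ - 1)) * extBeta η p q ξ₁ ξ₂ := by
    rw [Complex.cpow_one, ← hdef]; ring
  rw [this, ← Complex.cpow_add _ _ hd, ← Complex.cpow_add _ _ hd, ← Complex.cpow_add _ _ hd,
    show (1 - ξ₁ - ξ₂ + 1 + (ξ₁ - 1) + (ξ₂ - 1)) = 0 by ring, Complex.cpow_zero, one_mul]
end

section
/- For all complex ξ₁, ξ₂, p, q, η with Re(ξ₁) > 0, Re(ξ₂) > 0, Re(p) > 0, Re(q) > 0 and Re(η) > -1, the extended beta function satisfies the recurrence B_η^{p,q}(ξ₁,ξ₂) = B_η^{p,q}(ξ₁+1,ξ₂) + B_η^{p,q}(ξ₁,ξ₂+1). -/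
open MeasureTheory Complex

/-!
The recurrence is the identity `y^(ξ₁-1) (1-y)^(ξ₂-1) = y^ξ₁ (1-y)^(ξ₂-1) + y^(ξ₁-1) (1-y)^ξ₂`
integrated over `(0,1)`; the work is to show that both integrals on the right converge.
Expanding `e^(ts)` and evaluating the moments `∫₀¹ s^k (1-s²)^a ds` as beta integrals
(substitute `s = √u`) gives the representation
`S_η(t) = Γ(η+1)/(√π Γ(η+3/2)) ∫₀¹ (1-s²)^(η+1/2) (2(η+1) + t s) e^(ts) ds`, valid for `Re η > -1`.
For `Re t < 0` it bounds `|S_η(t)|` by a constant times `1 + |t|/|Re t|`, which is constant along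
the rays `t = -w/r`, `r > 0`. Hence the Bessel–Struve factors of the integrand are bounded on
`(0,1)` and the beta weight makes each integral converge.
-/
open Set

lemma Complex.cpow_sub_one_mul_self {ξ : ℂ} (hξ : ξ ≠ 0) (x : ℂ) : x ^ (ξ - 1) * x = x ^ ξ := by
  rcases eq_or_ne x 0 with rfl | hx
  · rw [mul_zero, zero_cpow hξ]
  · rw [cpow_sub _ _ hx, cpow_one, div_mul_cancel₀ _ hx]

lemma abs_deriv_sq_smul_eq (a : ℂ) (k : ℕ) {x : ℝ} (hx : 0 < x) :
    |2 * x| • (((x ^ 2 : ℝ) : ℂ) ^ (((k : ℂ) - 1) / 2) * (1 - ((x ^ 2 : ℝ) : ℂ)) ^ a) =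
      2 * ((x : ℂ) ^ k * (1 - (x : ℂ) ^ 2) ^ a) := by
  have hsqrt : ((x ^ 2 : ℝ) : ℂ) ^ (((k : ℂ) - 1) / 2) = (x : ℂ) ^ ((k : ℂ) - 1) := by
    rw [← Real.rpow_two, ← cpow_mul_ofReal_nonneg hx.le]
    push_cast; ring_nf
  have hx' : (x : ℂ) ≠ 0 := by exact_mod_cast hx.ne'
  rw [abs_of_pos (by positivity), hsqrt, Complex.real_smul, ← Complex.cpow_natCast,
    Complex.cpow_sub _ _ hx', Complex.cpow_one]
  push_cast
  field_simp

lemma sq_image_Ioo_zero_one : (fun x : ℝ => x ^ 2) '' Ioo 0 1 = Ioo 0 1 := by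
  ext u
  constructor
  · rintro ⟨x, ⟨h0, h1⟩, rfl⟩
    exact ⟨by positivity, by nlinarith⟩
  · rintro ⟨h0, h1⟩
    exact ⟨√u, ⟨Real.sqrt_pos.2 h0, (Real.sqrt_lt' one_pos).2 (by simpa using h1)⟩,
      Real.sq_sqrt h0.le⟩

lemma hasDerivWithinAt_sq_Ioo : ∀ x ∈ Ioo (0 : ℝ) 1,
    HasDerivWithinAt (fun x : ℝ => x ^ 2) (2 * x) (Ioo 0 1) x := fun x _ => by
  simpa using (hasDerivAt_pow 2 x).hasDerivWithinAt

lemma injOn_sq_Ioo : InjOn (fun x : ℝ => x ^ 2) (Ioo 0 1) :=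
  fun _ ha _ hb h => (pow_left_inj₀ ha.1.le hb.1.le two_ne_zero).1 h

noncomputable def struveMoment (a : ℂ) (k : ℕ) : ℂ :=
  ∫ s in Ioo (0 : ℝ) 1, (s : ℂ) ^ k * (1 - (s : ℂ) ^ 2) ^ a

lemma betaIntegral_half_eq_integral_Ioo (a : ℂ) (k : ℕ) :
    Complex.betaIntegral (((k : ℂ) + 1) / 2) (a + 1) =
      ∫ u in Ioo (0 : ℝ) 1, (u : ℂ) ^ (((k : ℂ) - 1) / 2) * (1 - (u : ℂ)) ^ a := by
  rw [Complex.betaIntegral, intervalIntegral.integral_of_le zero_le_one,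
    integral_Ioc_eq_integral_Ioo]
  ring_nf

lemma struveMoment_eq_betaIntegral (a : ℂ) (k : ℕ) :
    struveMoment a k = Complex.betaIntegral (((k : ℂ) + 1) / 2) (a + 1) / 2 := by
  rw [betaIntegral_half_eq_integral_Ioo, ← sq_image_Ioo_zero_one,
    integral_image_eq_integral_abs_deriv_smul measurableSet_Ioo hasDerivWithinAt_sq_Ioo
      injOn_sq_Ioo, setIntegral_congr_fun measurableSet_Ioo fun x hx =>
      abs_deriv_sq_smul_eq a k hx.1, integral_const_mul, struveMoment]
  ring

lemma integrableOn_pow_mul_one_sub_sq_cpow {a : ℂ} (ha : -1 < a.re) (k : ℕ) :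
    IntegrableOn (fun s : ℝ => (s : ℂ) ^ k * (1 - (s : ℂ) ^ 2) ^ a) (Ioo 0 1) := by
  have hbeta := (intervalIntegrable_iff_integrableOn_Ioo_of_le zero_le_one).1
    (Complex.betaIntegral_convergent (u := ((k : ℂ) + 1) / 2) (v := a + 1)
      (by simp; positivity) (by simp; linarith))
  rw [show ((k : ℂ) + 1) / 2 - 1 = ((k : ℂ) - 1) / 2 by ring, add_sub_cancel_right,
    ← sq_image_Ioo_zero_one, integrableOn_image_iff_integrableOn_abs_deriv_smul
    measurableSet_Ioo hasDerivWithinAt_sq_Ioo injOn_sq_Ioo] at hbeta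
  simpa [IntegrableOn] using (hbeta.congr_fun (fun x hx => abs_deriv_sq_smul_eq a k hx.1)
    measurableSet_Ioo).const_mul (1 / 2 : ℂ)

lemma integrableOn_one_sub_sq_cpow {a : ℂ} (ha : -1 < a.re) :
    IntegrableOn (fun s : ℝ => (1 - (s : ℂ) ^ 2) ^ a) (Ioo 0 1) := by
  simpa using integrableOn_pow_mul_one_sub_sq_cpow ha 0

lemma two_mul_mul_struveMoment {η : ℂ} (hη : -1 < η.re) (m : ℕ) :
    2 * ((m : ℂ) / 2 + η + 1) * struveMoment (η + 1 / 2) m =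
      Complex.Gamma (((m : ℂ) + 1) / 2) * Complex.Gamma (η + 3 / 2) /
        Complex.Gamma ((m : ℂ) / 2 + η + 1) := by
  have hz : 0 < ((m : ℂ) / 2 + η + 1).re := by
    have : (0 : ℝ) ≤ m / 2 := by positivity
    simp; linarith
  have hz0 : ((m : ℂ) / 2 + η + 1) ≠ 0 := fun h => by simp [h] at hz
  have hbeta := Complex.Gamma_mul_Gamma_eq_betaIntegral (s := ((m : ℂ) + 1) / 2)
    (t := η + 3 / 2) (by simp; positivity) (by simp; linarith)
  rw [show ((m : ℂ) + 1) / 2 + (η + 3 / 2) = ((m : ℂ) / 2 + η + 1) + 1 by ring,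
    Complex.Gamma_add_one _ hz0] at hbeta
  rw [struveMoment_eq_betaIntegral, show η + 1 / 2 + 1 = η + 3 / 2 by ring,
    eq_div_iff (Complex.Gamma_ne_zero_of_re_pos hz), hbeta]
  ring

noncomputable def struveLaplace (a : ℂ) (j : ℕ) (t : ℂ) : ℂ :=
  ∫ s in Ioo (0 : ℝ) 1, (s : ℂ) ^ j * (1 - (s : ℂ) ^ 2) ^ a * Complex.exp (t * s)

lemma hasSum_struveLaplace {a : ℂ} (ha : -1 < a.re) (j : ℕ) (t : ℂ) :
    HasSum (fun m : ℕ => t ^ m / m.factorial * struveMoment a (m + j)) (struveLaplace a j t) := by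
  simp only [struveMoment, struveLaplace, ← integral_const_mul]
  refine hasSum_integral_of_dominated_convergence
    (fun m s => ‖t‖ ^ m / m.factorial * ‖(1 - (s : ℂ) ^ 2) ^ a‖)
    (fun m => ((integrableOn_pow_mul_one_sub_sq_cpow ha (m + j)).const_mul _).aestronglyMeasurable)
    (fun m => ?_) (ae_of_all _ fun s => (Real.summable_pow_div_factorial ‖t‖).mul_right _) ?_
    (ae_of_all _ fun s => ?_)
  · filter_upwards [ae_restrict_mem measurableSet_Ioo] with s hs
    have hs1 : ‖(s : ℂ) ^ (m + j)‖ ≤ 1 := by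
      rw [norm_pow, Complex.norm_real, Real.norm_of_nonneg hs.1.le]
      exact pow_le_one₀ hs.1.le hs.2.le
    rw [norm_mul, norm_mul, norm_div, norm_pow, Complex.norm_natCast]
    exact mul_le_mul_of_nonneg_left (mul_le_of_le_one_left (norm_nonneg _) hs1) (by positivity)
  · simp only [tsum_mul_right]
    exact (integrableOn_one_sub_sq_cpow ha).norm.const_mul _
  · have := (NormedSpace.expSeries_div_hasSum_exp (t * s)).mul_left
      ((s : ℂ) ^ j * (1 - (s : ℂ) ^ 2) ^ a)
    rw [← Complex.exp_eq_exp_ℂ] at this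
    have hterm : ∀ m : ℕ, t ^ m / m.factorial * ((s : ℂ) ^ (m + j) * (1 - (s : ℂ) ^ 2) ^ a) =
        (s : ℂ) ^ j * (1 - (s : ℂ) ^ 2) ^ a * ((t * s) ^ m / m.factorial) := fun m => by ring
    simpa only [hterm] using this

lemma besselStruve_eq_struveLaplace {η : ℂ} (hη : -1 < η.re) (t : ℂ) :
    besselStruve η t = Complex.Gamma (η + 1) / (√Real.pi * Complex.Gamma (η + 3 / 2)) *
      (2 * (η + 1) * struveLaplace (η + 1 / 2) 0 t + t * struveLaplace (η + 1 / 2) 1 t) := by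
  have ha : -1 < (η + 1 / 2).re := by simp; linarith
  set u : ℕ → ℂ := fun n => t ^ n / n.factorial * struveMoment (η + 1 / 2) n
  have h0 : HasSum u (struveLaplace (η + 1 / 2) 0 t) := hasSum_struveLaplace ha 0 t
  have h1 : HasSum (fun n : ℕ => n * u n) (t * struveLaplace (η + 1 / 2) 1 t) := by
    have hshift := (hasSum_struveLaplace ha 1 t).mul_left t
    rw [← hasSum_nat_add_iff' 1, Finset.sum_range_one, Nat.cast_zero, zero_mul, sub_zero]
    have hterm : ∀ n : ℕ, ((n + 1 : ℕ) : ℂ) * u (n + 1) =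
        t * (t ^ n / n.factorial * struveMoment (η + 1 / 2) (n + 1)) := fun n => by
      simp only [u, Nat.factorial_succ]
      push_cast
      field_simp
      ring
    simpa only [hterm] using hshift
  have hG : Complex.Gamma (η + 3 / 2) ≠ 0 :=
    Complex.Gamma_ne_zero_of_re_pos (by simp; linarith)
  have hsum := ((h0.mul_left (2 * (η + 1))).add h1).mul_left
    (Complex.Gamma (η + 1) / (√Real.pi * Complex.Gamma (η + 3 / 2)))
  rw [besselStruve, ← tsum_mul_left, ← hsum.tsum_eq]
  congr 1
  funext n
  have hz : 0 < ((n : ℂ) / 2 + η + 1).re := by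
    have : (0 : ℝ) ≤ n / 2 := by positivity
    simp; linarith
  simp only [u]
  rw [show 2 * (η + 1) * (t ^ n / n.factorial * struveMoment (η + 1 / 2) n) +
      n * (t ^ n / n.factorial * struveMoment (η + 1 / 2) n) =
      t ^ n / n.factorial * (2 * ((n : ℂ) / 2 + η + 1) * struveMoment (η + 1 / 2) n) by ring,
    two_mul_mul_struveMoment hη n]
  have hG3 := Complex.Gamma_ne_zero_of_re_pos hz
  -- `field_simp` would rewrite the Gamma arguments and no longer see `hG`, `hG3`.
  generalize Complex.Gamma (η + 3 / 2) = G at hG ⊢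
  generalize Complex.Gamma ((n : ℂ) / 2 + η + 1) = G' at hG3 ⊢
  field_simp

lemma measurable_struveLaplace (a : ℂ) (j : ℕ) : Measurable (struveLaplace a j) := by
  have hF : StronglyMeasurable (fun p : ℂ × ℝ =>
      (p.2 : ℂ) ^ j * (1 - (p.2 : ℂ) ^ 2) ^ a * Complex.exp (p.1 * p.2)) := by
    apply Measurable.stronglyMeasurable
    fun_prop
  exact (hF.integral_prod_right' (ν := volume.restrict (Ioo (0 : ℝ) 1))).measurable

lemma measurable_besselStruve {η : ℂ} (hη : -1 < η.re) : Measurable (besselStruve η) := by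
  rw [funext (besselStruve_eq_struveLaplace hη)]
  have h0 := measurable_struveLaplace (η + 1 / 2) 0
  have h1 := measurable_struveLaplace (η + 1 / 2) 1
  fun_prop

lemma Real.mul_exp_neg_le_one (u : ℝ) : u * Real.exp (-u) ≤ 1 := by
  calc u * Real.exp (-u) ≤ Real.exp u * Real.exp (-u) :=
        mul_le_mul_of_nonneg_right (by linarith [Real.add_one_le_exp u]) (Real.exp_pos _).le
    _ = 1 := by rw [← Real.exp_add, add_neg_cancel, Real.exp_zero]

lemma norm_struveLaplace_zero_le {a t : ℂ} (ha : -1 < a.re) (ht : t.re ≤ 0) :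
    ‖struveLaplace a 0 t‖ ≤ ∫ s in Ioo (0 : ℝ) 1, ‖(1 - (s : ℂ) ^ 2) ^ a‖ := by
  refine norm_integral_le_of_norm_le (integrableOn_one_sub_sq_cpow ha).norm ?_
  filter_upwards [ae_restrict_mem measurableSet_Ioo] with s hs
  have hexp : ‖Complex.exp (t * s)‖ ≤ 1 := by
    rw [Complex.norm_exp, Real.exp_le_one_iff, Complex.re_mul_ofReal]
    exact mul_nonpos_of_nonpos_of_nonneg ht hs.1.le
  rw [pow_zero, one_mul, norm_mul]
  exact mul_le_of_le_one_right (norm_nonneg _) hexp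

lemma norm_mul_struveLaplace_one_le {a t : ℂ} (ha : -1 < a.re) (ht : t.re < 0) :
    ‖t * struveLaplace a 1 t‖ ≤ ‖t‖ / -t.re * ∫ s in Ioo (0 : ℝ) 1, ‖(1 - (s : ℂ) ^ 2) ^ a‖ := by
  rw [struveLaplace, ← integral_const_mul, ← integral_const_mul]
  refine norm_integral_le_of_norm_le ((integrableOn_one_sub_sq_cpow ha).norm.const_mul _) ?_
  filter_upwards [ae_restrict_mem measurableSet_Ioo] with s hs
  have hdecay : ‖t‖ * s * Real.exp (t.re * s) ≤ ‖t‖ / -t.re := by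
    calc ‖t‖ * s * Real.exp (t.re * s)
        = ‖t‖ / -t.re * ((-t.re * s) * Real.exp (-(-t.re * s))) := by
          rw [neg_mul, neg_neg]
          field_simp [ht.ne]
      _ ≤ ‖t‖ / -t.re * 1 := by
          gcongr
          · exact div_nonneg (norm_nonneg _) (neg_nonneg.2 ht.le)
          · exact Real.mul_exp_neg_le_one _
      _ = ‖t‖ / -t.re := mul_one _
  rw [norm_mul, norm_mul, norm_mul, pow_one, Complex.norm_real, Real.norm_of_nonneg hs.1.le,
    Complex.norm_exp, Complex.re_mul_ofReal]
  calc ‖t‖ * (s * ‖(1 - (s : ℂ) ^ 2) ^ a‖ * Real.exp (t.re * s))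
      = ‖t‖ * s * Real.exp (t.re * s) * ‖(1 - (s : ℂ) ^ 2) ^ a‖ := by ring
    _ ≤ ‖t‖ / -t.re * ‖(1 - (s : ℂ) ^ 2) ^ a‖ := by gcongr

lemma norm_besselStruve_le {η t : ℂ} (hη : -1 < η.re) (ht : t.re < 0) :
    ‖besselStruve η t‖ ≤ ‖Complex.Gamma (η + 1) / (√Real.pi * Complex.Gamma (η + 3 / 2))‖ *
      ((‖2 * (η + 1)‖ + ‖t‖ / -t.re) *
        ∫ s in Ioo (0 : ℝ) 1, ‖(1 - (s : ℂ) ^ 2) ^ (η + 1 / 2)‖) := by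
  have ha : -1 < (η + 1 / 2).re := by simp; linarith
  rw [besselStruve_eq_struveLaplace hη, norm_mul]
  gcongr
  calc _ ≤ ‖2 * (η + 1)‖ * ‖struveLaplace (η + 1 / 2) 0 t‖ +
        ‖t * struveLaplace (η + 1 / 2) 1 t‖ := by
        rw [← norm_mul]; exact norm_add_le _ _
    _ ≤ _ := by
        rw [add_mul]
        gcongr
        · exact norm_struveLaplace_zero_le ha ht.le
        · exact norm_mul_struveLaplace_one_le ha ht

lemma exists_norm_besselStruve_neg_div_le {η w : ℂ} (hη : -1 < η.re) (hw : 0 < w.re) :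
    ∃ C, ∀ r : ℝ, 0 < r → ‖besselStruve η (-w / r)‖ ≤ C := by
  refine ⟨‖Complex.Gamma (η + 1) / (√Real.pi * Complex.Gamma (η + 3 / 2))‖ *
      ((‖2 * (η + 1)‖ + ‖w‖ / w.re) *
        ∫ s in Ioo (0 : ℝ) 1, ‖(1 - (s : ℂ) ^ 2) ^ (η + 1 / 2)‖),
    fun r hr => (norm_besselStruve_le hη ?_).trans_eq ?_⟩
  · rw [Complex.div_ofReal_re, Complex.neg_re]
    exact div_neg_of_neg_of_pos (neg_neg_of_pos hw) hr
  · have hratio : ‖-w / r‖ / -(-w / r).re = ‖w‖ / w.re := by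
      rw [Complex.div_ofReal_re, Complex.neg_re, norm_div, norm_neg, Complex.norm_real,
        Real.norm_of_nonneg hr.le, neg_div, neg_neg, div_div_div_cancel_right₀ hr.ne']
    rw [hratio]

lemma intervalIntegrable_extBeta_integrand {η p q a b : ℂ} (hη : -1 < η.re) (hp : 0 < p.re)
    (hq : 0 < q.re) (ha : 0 < a.re) (hb : 0 < b.re) :
    IntervalIntegrable (fun y : ℝ => (y : ℂ) ^ (a - 1) * ((1 : ℂ) - (y : ℂ)) ^ (b - 1) *
      besselStruve η (-p / (y : ℂ)) * besselStruve η (-q / (1 - (y : ℂ)))) volume 0 1 := by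
  obtain ⟨C₁, hC₁⟩ := exists_norm_besselStruve_neg_div_le hη hp
  obtain ⟨C₂, hC₂⟩ := exists_norm_besselStruve_neg_div_le hη hq
  have hS := measurable_besselStruve hη
  rw [intervalIntegrable_iff_integrableOn_Ioo_of_le zero_le_one]
  refine ((((intervalIntegrable_iff_integrableOn_Ioo_of_le zero_le_one).1
    (Complex.betaIntegral_convergent ha hb)).mul_bdd (c := C₁) ?_ ?_).mul_bdd (c := C₂) ?_ ?_)
  · exact (hS.comp (by fun_prop)).aestronglyMeasurable
  · filter_upwards [ae_restrict_mem measurableSet_Ioo] with y hy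
    exact hC₁ y hy.1
  · exact (hS.comp (by fun_prop)).aestronglyMeasurable
  · filter_upwards [ae_restrict_mem measurableSet_Ioo] with y hy
    rw [show (1 : ℂ) - y = ((1 - y : ℝ) : ℂ) by push_cast; ring]
    exact hC₂ _ (sub_pos.2 hy.2)

theorem extBeta_recurrence (ξ₁ ξ₂ p q η : ℂ)
    (h1 : 0 < ξ₁.re) (h2 : 0 < ξ₂.re) (hp : 0 < p.re) (hq : 0 < q.re) (hη : -1 < η.re) :
    extBeta η p q ξ₁ ξ₂ = extBeta η p q (ξ₁ + 1) ξ₂ + extBeta η p q ξ₁ (ξ₂ + 1) := by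
  have hξ₁ : ξ₁ ≠ 0 := fun h => by simp [h] at h1
  have hξ₂ : ξ₂ ≠ 0 := fun h => by simp [h] at h2
  have hshift : ∀ {a : ℂ}, 0 < a.re → 0 < (a + 1).re := fun h => by simp; linarith
  rw [extBeta, extBeta, extBeta, ← intervalIntegral.integral_add
    (intervalIntegrable_extBeta_integrand hη hp hq (hshift h1) h2)
    (intervalIntegrable_extBeta_integrand hη hp hq h1 (hshift h2))]
  congr 1
  funext y
  rw [add_sub_cancel_right, add_sub_cancel_right, ← Complex.cpow_sub_one_mul_self hξ₁,
    ← Complex.cpow_sub_one_mul_self hξ₂]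
  ring
end

section
/- For all k ∈ ℕ and all complex ξ₁, ξ₂, ξ₃, p, q, η with Re(ξ₃) > Re(ξ₂) > 0, Re(p) > 0, Re(q) > 0 and Re(η) > -1, the k-th derivative with respect to x of the extended Gauss hypergeometric function satisfies, for |x| < 1, d^k/dx^k [F_η^{p,q}(ξ₁,ξ₂;ξ₃;x)] = ((ξ₁)_k (ξ₂)_k / (ξ₃)_k) · F_η^{p,q}(ξ₁+k, ξ₂+k; ξ₃+k; x), where (a)_k denotes the Pochhammer symbol. -/
open MeasureTheory Complex

/-! `extF` is the power series `∑ cₗ xˡ` with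
`cₗ = (ξ₁)ₗ B_η^{p,q}(ξ₂ + l, ξ₃ - ξ₂) / (B(ξ₂, ξ₃ - ξ₂) l!)`. On `(0, 1]` the integrands of
`B_η^{p,q}(ξ₂ + l, ξ₃ - ξ₂)` decrease in norm as `l` grows, so `‖cₗ‖` is eventually at most a
multiple of `‖(ξ₁)ₗ‖ / l!`, and the series may be differentiated termwise on the unit disc.
The identities `(ξ₁)_{l+1} = ξ₁ (ξ₁ + 1)ₗ` and `B(ξ₂ + 1, ξ₃ - ξ₂) = (ξ₂ / ξ₃) B(ξ₂, ξ₃ - ξ₂)`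
turn `(l + 1) c_{l+1}` into `ξ₁ ξ₂ / ξ₃` times the `l`-th coefficient with all three parameters
raised by one; this is the case `k = 1`, and induction on `k` does the rest. -/

open Filter Nat Topology

lemma poch_zero {a : ℂ} (ha : Gamma a ≠ 0) : poch a 0 = 1 := by
  simp [poch, ha]

lemma poch_succ_right (a : ℂ) (n : ℕ) : poch a (n + 1) = (a + n) * poch a n := by
  rcases eq_or_ne (a + n) 0 with h | h
  · have hΓ : Gamma a = 0 := (Gamma_eq_zero_iff a).2 ⟨n, by linear_combination h⟩
    simp [poch, hΓ]
  · rw [poch, poch, Nat.cast_succ, ← add_assoc, Gamma_add_one _ h, mul_div_assoc]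

lemma poch_succ_left (a : ℂ) (n : ℕ) : poch a (n + 1) = a * poch (a + 1) n := by
  rcases eq_or_ne a 0 with rfl | ha
  · simp [poch]
  · rw [poch, poch, Gamma_add_one a ha, ← mul_div_assoc, mul_div_mul_left _ _ ha, Nat.cast_succ,
      add_comm (n : ℂ), add_assoc]

namespace Complex

lemma betaIntegral_add_one_left {u v : ℂ} (hu : 0 < u.re) (hv : 0 < v.re) :
    betaIntegral (u + 1) v = u / (u + v) * betaIntegral u v := by
  have huv : u + v ≠ 0 := ne_of_apply_ne re (by simpa using (add_pos hu hv).ne')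
  have hu0 : u ≠ 0 := ne_of_apply_ne re (by simpa using hu.ne')
  rw [betaIntegral_eq_Gamma_mul_div _ _ (by simpa using hu.trans (lt_add_one _)) hv,
    betaIntegral_eq_Gamma_mul_div _ _ hu hv, add_right_comm, Gamma_add_one _ hu0,
    Gamma_add_one _ huv]
  field_simp

lemma betaIntegral_ne_zero {u v : ℂ} (hu : 0 < u.re) (hv : 0 < v.re) : betaIntegral u v ≠ 0 := by
  rw [betaIntegral_eq_Gamma_mul_div _ _ hu hv]
  exact div_ne_zero (mul_ne_zero (Gamma_ne_zero_of_re_pos hu) (Gamma_ne_zero_of_re_pos hv))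
    (Gamma_ne_zero_of_re_pos (by simpa using add_pos hu hv))

end Complex

theorem hasDerivAt_tsum_mul_pow {𝕜 : Type*} [RCLike 𝕜] {c : ℕ → 𝕜} {r : ℝ}
    (hc : Summable fun n : ℕ ↦ ‖((n : 𝕜) + 1) * c (n + 1)‖ * r ^ n) {x : 𝕜} (hx : ‖x‖ < r) :
    HasDerivAt (fun z ↦ ∑' n, c n * z ^ n) (∑' n : ℕ, ((n : 𝕜) + 1) * c (n + 1) * x ^ n) x := by
  set u : ℕ → ℝ := fun n ↦ ‖(n : 𝕜) * c n‖ * r ^ (n - 1)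
  have hu : Summable u := (summable_nat_add_iff 1).1 <| hc.congr fun n ↦ by
    simp only [u, Nat.cast_succ, Nat.add_sub_cancel]
  have hbound (n : ℕ) (y : 𝕜) (hy : y ∈ Metric.ball 0 r) : ‖c n * (n * y ^ (n - 1))‖ ≤ u n := by
    rw [mem_ball_zero_iff] at hy
    have : ‖y‖ ^ (n - 1) ≤ r ^ (n - 1) := pow_le_pow_left₀ (norm_nonneg y) hy.le _
    simp only [u, norm_mul, norm_pow]
    nlinarith [mul_nonneg (norm_nonneg (c n)) (norm_nonneg (n : 𝕜))]
  have hx' : x ∈ Metric.ball 0 r := mem_ball_zero_iff.2 hx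
  have hsum0 : Summable fun n ↦ c n * (0 : 𝕜) ^ n :=
    summable_of_ne_finset_zero (s := {0}) fun n hn ↦ by simp_all
  have hD := hasDerivAt_tsum_of_isPreconnected hu Metric.isOpen_ball
    (convex_ball 0 r).isPreconnected (fun n y _ ↦ (hasDerivAt_pow n y).const_mul (c n)) hbound
    (Metric.mem_ball_self (hx.trans_le' (norm_nonneg x))) hsum0 hx'
  rw [(Summable.of_norm_bounded hu fun n ↦ hbound n x hx').tsum_eq_zero_add] at hD
  refine hD.congr_deriv ?_
  simp only [Nat.cast_zero, zero_mul, mul_zero, zero_add, Nat.cast_succ, Nat.add_sub_cancel]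
  exact tsum_congr fun n ↦ by ring

lemma summable_norm_poch_div_factorial_mul_pow (a : ℂ) {r : ℝ} (hr0 : 0 ≤ r) (hr1 : r < 1) :
    Summable fun n : ℕ ↦ ‖poch a n‖ / n ! * r ^ n := by
  obtain ⟨s, hrs, hs1⟩ := exists_between hr1
  obtain ⟨N, hN⟩ := exists_nat_gt (‖a‖ * r / (s - r))
  refine summable_of_ratio_norm_eventually_le hs1 ?_
  filter_upwards [eventually_ge_atTop N] with n hn
  have hratio : ‖a + n‖ * r / (n + 1) ≤ s := by
    rw [div_lt_iff₀' (by linarith)] at hN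
    rw [div_le_iff₀ (by positivity)]
    nlinarith [norm_add_le a n, Complex.norm_natCast n, (Nat.cast_le (α := ℝ)).2 hn]
  have hstep : ‖poch a (n + 1)‖ / (n + 1)! * r ^ (n + 1) =
      ‖a + n‖ * r / (n + 1) * (‖poch a n‖ / n ! * r ^ n) := by
    rw [poch_succ_right, norm_mul, Nat.factorial_succ, Nat.cast_mul, Nat.cast_succ, pow_succ]
    field_simp
  rw [Real.norm_of_nonneg (by positivity), Real.norm_of_nonneg (by positivity), hstep]
  exact mul_le_mul_of_nonneg_right hratio (by positivity)

noncomputable def extBetaIntegrand (η p q ξ₁ ξ₂ : ℂ) (y : ℝ) : ℂ :=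
  (y : ℂ) ^ (ξ₁ - 1) * ((1 : ℂ) - (y : ℂ)) ^ (ξ₂ - 1) *
    besselStruve η (-p / (y : ℂ)) * besselStruve η (-q / (1 - (y : ℂ)))

lemma extBeta_eq_integral (η p q ξ₁ ξ₂ : ℂ) :
    extBeta η p q ξ₁ ξ₂ = ∫ y in (0 : ℝ)..1, extBetaIntegrand η p q ξ₁ ξ₂ y :=
  rfl

lemma extBetaIntegrand_add_nat (η p q a b : ℂ) (m : ℕ) {y : ℝ} (hy : 0 < y) :
    extBetaIntegrand η p q (a + m) b y = (y : ℂ) ^ m * extBetaIntegrand η p q a b y := by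
  rw [extBetaIntegrand, extBetaIntegrand, add_sub_right_comm,
    cpow_add _ _ (ofReal_ne_zero.2 hy.ne'), cpow_natCast]
  ring

lemma exists_eventually_norm_extBeta_add_nat_le (η p q a b : ℂ) :
    ∃ M, ∀ᶠ l : ℕ in atTop, ‖extBeta η p q (a + l) b‖ ≤ M := by
  by_cases h : ∃ l₀ : ℕ, IntervalIntegrable (extBetaIntegrand η p q (a + l₀) b) volume 0 1
  · obtain ⟨l₀, hl₀⟩ := h
    refine ⟨∫ y in (0 : ℝ)..1, ‖extBetaIntegrand η p q (a + l₀) b y‖,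
      eventually_atTop.2 ⟨l₀, fun l hl ↦ ?_⟩⟩
    obtain ⟨m, rfl⟩ := Nat.exists_eq_add_of_le hl
    rw [extBeta_eq_integral]
    refine intervalIntegral.norm_integral_le_of_norm_le zero_le_one
      (ae_of_all _ fun y ⟨hy0, hy1⟩ ↦ ?_) hl₀.norm
    rw [Nat.cast_add, ← add_assoc, extBetaIntegrand_add_nat η p q (a + l₀) b m hy0, norm_mul,
      norm_pow, norm_real, Real.norm_of_nonneg hy0.le]
    exact mul_le_of_le_one_left (norm_nonneg _) (pow_le_one₀ hy0.le hy1)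
  · -- otherwise every `extBeta` value here is the junk value `0` of a non-integrable integral
    exact ⟨0, .of_forall fun l ↦ by
      rw [extBeta_eq_integral, intervalIntegral.integral_undef (not_exists.1 h l), norm_zero]⟩

noncomputable def extFCoeff (η p q ξ₁ ξ₂ ξ₃ : ℂ) (l : ℕ) : ℂ :=
  poch ξ₁ l * extBeta η p q (ξ₂ + l) (ξ₃ - ξ₂) / (betaIntegral ξ₂ (ξ₃ - ξ₂) * l !)

lemma extF_eq_tsum (η p q ξ₁ ξ₂ ξ₃ : ℂ) :
    extF η p q ξ₁ ξ₂ ξ₃ = fun x ↦ ∑' l, extFCoeff η p q ξ₁ ξ₂ ξ₃ l * x ^ l :=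
  funext fun _ ↦ tsum_congr fun l ↦ by rw [extFCoeff]; ring

lemma summable_norm_extFCoeff_mul_pow (η p q ξ₁ ξ₂ ξ₃ : ℂ) {r : ℝ} (hr0 : 0 ≤ r) (hr1 : r < 1) :
    Summable fun l ↦ ‖extFCoeff η p q ξ₁ ξ₂ ξ₃ l‖ * r ^ l := by
  obtain ⟨M, hM⟩ := exists_eventually_norm_extBeta_add_nat_le η p q ξ₂ (ξ₃ - ξ₂)
  set B := betaIntegral ξ₂ (ξ₃ - ξ₂)
  refine .of_norm_bounded_eventually_nat
    ((summable_norm_poch_div_factorial_mul_pow ξ₁ hr0 hr1).mul_left (M / ‖B‖)) ?_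
  filter_upwards [hM] with l hl
  rw [Real.norm_of_nonneg (by positivity)]
  calc ‖extFCoeff η p q ξ₁ ξ₂ ξ₃ l‖ * r ^ l
      = ‖poch ξ₁ l‖ * ‖extBeta η p q (ξ₂ + l) (ξ₃ - ξ₂)‖ / (‖B‖ * l !) * r ^ l := by
        simp [extFCoeff, B]
    _ ≤ ‖poch ξ₁ l‖ * M / (‖B‖ * l !) * r ^ l := by gcongr
    _ = M / ‖B‖ * (‖poch ξ₁ l‖ / l ! * r ^ l) := by ring

lemma succ_mul_extFCoeff_succ (η p q : ℂ) {ξ₁ ξ₂ ξ₃ : ℂ} (h₂ : 0 < ξ₂.re) (h₃₂ : ξ₂.re < ξ₃.re)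
    (l : ℕ) : ((l : ℂ) + 1) * extFCoeff η p q ξ₁ ξ₂ ξ₃ (l + 1) =
      ξ₁ * ξ₂ / ξ₃ * extFCoeff η p q (ξ₁ + 1) (ξ₂ + 1) (ξ₃ + 1) l := by
  have hv : 0 < (ξ₃ - ξ₂).re := by simpa using h₃₂
  have hξ₂ : ξ₂ ≠ 0 := ne_of_apply_ne re (by simpa using h₂.ne')
  have hξ₃ : ξ₃ ≠ 0 := ne_of_apply_ne re (by simpa using (h₂.trans h₃₂).ne')
  have hB := betaIntegral_ne_zero h₂ hv
  have hB' := betaIntegral_add_one_left h₂ hv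
  rw [add_sub_cancel] at hB'
  rw [extFCoeff, extFCoeff, add_sub_add_right_eq_sub, hB', poch_succ_left, Nat.factorial_succ,
    Nat.cast_mul, Nat.cast_succ, add_right_comm ξ₂ 1, add_assoc ξ₂]
  field_simp

lemma hasDerivAt_extF (η p q : ℂ) {ξ₁ ξ₂ ξ₃ x : ℂ} (h₂ : 0 < ξ₂.re) (h₃₂ : ξ₂.re < ξ₃.re)
    (hx : ‖x‖ < 1) :
    HasDerivAt (extF η p q ξ₁ ξ₂ ξ₃)
      (ξ₁ * ξ₂ / ξ₃ * extF η p q (ξ₁ + 1) (ξ₂ + 1) (ξ₃ + 1) x) x := by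
  obtain ⟨r, hxr, hr1⟩ := exists_between hx
  have hcoeff := succ_mul_extFCoeff_succ η p q (ξ₁ := ξ₁) h₂ h₃₂
  have hsum : Summable fun n : ℕ ↦ ‖((n : ℂ) + 1) * extFCoeff η p q ξ₁ ξ₂ ξ₃ (n + 1)‖ * r ^ n := by
    simpa only [hcoeff, norm_mul, mul_assoc] using
      (summable_norm_extFCoeff_mul_pow η p q (ξ₁ + 1) (ξ₂ + 1) (ξ₃ + 1)
        ((norm_nonneg x).trans hxr.le) hr1).mul_left ‖ξ₁ * ξ₂ / ξ₃‖
  rw [extF_eq_tsum, extF_eq_tsum, ← tsum_mul_left]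
  simpa only [hcoeff, mul_assoc] using hasDerivAt_tsum_mul_pow hsum hxr

-- `poch a 0` is the junk value `0` when `Γ a = 0`, but then every term of `extF` vanishes too.
lemma poch_zero_mul_extF (η p q ξ₁ ξ₂ ξ₃ x : ℂ) :
    poch ξ₁ 0 * extF η p q ξ₁ ξ₂ ξ₃ x = extF η p q ξ₁ ξ₂ ξ₃ x := by
  rcases eq_or_ne (Gamma ξ₁) 0 with h | h
  · simp [extF, poch, h]
  · rw [poch_zero h, one_mul]

theorem extF_iteratedDeriv_general (k : ℕ) (ξ₁ ξ₂ ξ₃ p q η : ℂ)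
    (h1 : 0 < ξ₂.re) (h2 : ξ₂.re < ξ₃.re) :
    ∀ x : ℂ, ‖x‖ < 1 →
      iteratedDeriv k (fun x => extF η p q ξ₁ ξ₂ ξ₃ x) x =
        (poch ξ₁ k * poch ξ₂ k / poch ξ₃ k) *
          extF η p q (ξ₁ + k) (ξ₂ + k) (ξ₃ + k) x := by
  induction k with
  | zero =>
    intro x _
    rw [iteratedDeriv_zero, poch_zero (Gamma_ne_zero_of_re_pos h1),
      poch_zero (Gamma_ne_zero_of_re_pos (h1.trans h2))]
    simp [poch_zero_mul_extF]
  | succ k ih =>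
    intro x hx
    have hnear : iteratedDeriv k (fun x => extF η p q ξ₁ ξ₂ ξ₃ x) =ᶠ[𝓝 x] fun y ↦
        (poch ξ₁ k * poch ξ₂ k / poch ξ₃ k) * extF η p q (ξ₁ + k) (ξ₂ + k) (ξ₃ + k) y :=
      eventually_of_mem (Metric.isOpen_ball.mem_nhds (mem_ball_zero_iff.2 hx))
        fun y hy ↦ ih y (mem_ball_zero_iff.1 hy)
    have hshift := hasDerivAt_extF η p q (ξ₁ := ξ₁ + k) (ξ₂ := ξ₂ + k) (ξ₃ := ξ₃ + k)
      (by simpa using add_pos_of_pos_of_nonneg h1 k.cast_nonneg) (by simpa using h2) hx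
    rw [iteratedDeriv_succ, hnear.deriv_eq, deriv_const_mul _ hshift.differentiableAt,
      hshift.deriv]
    simp only [poch_succ_right, Nat.cast_succ, ← add_assoc, div_eq_mul_inv, mul_inv]
    ring

theorem extF_iteratedDeriv (k : ℕ) (ξ₁ ξ₂ ξ₃ p q η : ℂ)
    (h1 : 0 < ξ₂.re) (h2 : ξ₂.re < ξ₃.re) (hp : 0 < p.re) (hq : 0 < q.re)
    (hη : -1 < η.re) :
    ∀ x : ℂ, ‖x‖ < 1 →
      iteratedDeriv k (fun x => extF η p q ξ₁ ξ₂ ξ₃ x) x =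
        (poch ξ₁ k * poch ξ₂ k / poch ξ₃ k) *
          extF η p q (ξ₁ + k) (ξ₂ + k) (ξ₃ + k) x :=
  extF_iteratedDeriv_general k ξ₁ ξ₂ ξ₃ p q η h1 h2
end

section
/- For every nonzero t ∈ ℂ, the Bessel–Struve kernel function of order η = 1/2 satisfies S_{1/2}(t) = (e^t - 1)/t; that is, (Γ(3/2)/√π) Σ_{m=0}^∞ t^m Γ((m+1)/2) / (m! Γ(m/2 + 3/2)) = (e^t - 1)/t. -/
open MeasureTheory Complex

/-! At `η = 1/2` the denominator `Γ(m/2 + 3/2)` equals `((m + 1)/2) Γ((m + 1)/2)`, so the series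
collapses to `2 ∑ tᵐ/(m + 1)! = 2 (eᵗ - 1)/t`, and the prefactor is `Γ(3/2)/√π = 1/2`. -/

open scoped Nat

lemma Complex.Gamma_one_half_add_one : Gamma (1 / 2 + 1) = (Real.sqrt Real.pi : ℂ) / 2 := by
  have h : Gamma (1 / 2) = (Real.sqrt Real.pi : ℂ) := by
    rw [show (1 / 2 : ℂ) = ((1 / 2 : ℝ) : ℂ) by push_cast; rfl, Gamma_ofReal, Real.Gamma_one_half_eq]
  rw [Gamma_add_one _ (by norm_num), h]
  ring

lemma Complex.hasSum_pow_div_factorial_succ {t : ℂ} (ht : t ≠ 0) :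
    HasSum (fun m : ℕ => t ^ m / (m + 1)!) ((exp t - 1) / t) := by
  have hexp : HasSum (fun m : ℕ => t ^ (m + 1) / (m + 1)!) (exp t - 1) := by
    rw [hasSum_nat_add_iff (f := fun n : ℕ => t ^ n / n !) 1, exp_eq_exp_ℂ]
    simpa using NormedSpace.expSeries_div_hasSum_exp t
  have hterm (m : ℕ) : t ^ (m + 1) / (m + 1)! / t = t ^ m / (m + 1)! := by
    rw [pow_succ, mul_div_right_comm, mul_div_cancel_right₀ _ ht]
  simpa only [hterm] using hexp.div_const t

lemma besselStruve_half_term (t : ℂ) (m : ℕ) :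
    t ^ m * Gamma (((m : ℂ) + 1) / 2) / ((m ! : ℂ) * Gamma ((m : ℂ) / 2 + 1 / 2 + 1)) =
      2 * (t ^ m / (m + 1)!) := by
  have hs : 0 < (((m : ℂ) + 1) / 2).re := by
    norm_num [div_re]
    positivity
  have hΓ : Gamma (((m : ℂ) + 1) / 2) ≠ 0 := Gamma_ne_zero_of_re_pos hs
  rw [show (m : ℂ) / 2 + 1 / 2 + 1 = ((m : ℂ) + 1) / 2 + 1 by ring,
    Gamma_add_one _ (ne_of_apply_ne re hs.ne'), Nat.factorial_succ]
  push_cast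
  field_simp

theorem besselStruve_half (t : ℂ) (ht : t ≠ 0) :
    besselStruve (1/2) t = (Complex.exp t - 1) / t := by
  rw [besselStruve, tsum_congr (besselStruve_half_term t), tsum_mul_left,
    (hasSum_pow_div_factorial_succ ht).tsum_eq, Gamma_one_half_add_one]
  have hsqrt : (Real.sqrt Real.pi : ℂ) ≠ 0 := ofReal_ne_zero.mpr (Real.sqrt_pos.mpr Real.pi_pos).ne'
  field_simp
end

section
/- For all complex ξ₁, ξ₂, p, q with Re(ξ₁) > 0, Re(ξ₂) > 0, Re(p) > 0 and Re(q) > 0, the extended beta function of order η = -1/2 reduces to the Choi–Rathie–Parmar extended beta function: B_{-1/2}^{p,q}(ξ₁,ξ₂) = ∫₀¹ y^{ξ₁-1} (1-y)^{ξ₂-1} exp(-p/y - q/(1-y)) dy. -/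
open MeasureTheory Complex

lemma besselStruve_neg_half (t : ℂ) : besselStruve (-(1/2)) t = Complex.exp t := by
  have hG : Complex.Gamma (-(1/2) + 1) = (Real.sqrt Real.pi : ℂ) := by
    norm_num
    rw [show (1/2 : ℂ) = ((1/2 : ℝ) : ℂ) by norm_num, Complex.Gamma_ofReal,
      Real.Gamma_one_half_eq]
  have hsq : (Real.sqrt Real.pi : ℂ) ≠ 0 := by
    simpa using (Real.sqrt_pos.mpr Real.pi_pos).ne'
  rw [besselStruve, hG, div_self hsq, one_mul]
  have : ∀ m : ℕ, t ^ m * Complex.Gamma (((m : ℂ) + 1) / 2) /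
      ((m.factorial : ℂ) * Complex.Gamma ((m : ℂ) / 2 + -(1/2) + 1)) = t ^ m / m.factorial := by
    intro m
    have he : (m : ℂ) / 2 + -(1/2) + 1 = ((m : ℂ) + 1) / 2 := by ring
    rw [he]
    have hGne : Complex.Gamma (((m : ℂ) + 1) / 2) ≠ 0 := by
      apply Complex.Gamma_ne_zero
      intro n hn
      rw [show ((m:ℂ)+1)/2 = ((((m:ℝ)+1)/2 : ℝ) : ℂ) by push_cast; ring,
        show (-(n:ℂ)) = (((-(n:ℝ)) : ℝ) : ℂ) by push_cast; ring,
        Complex.ofReal_inj] at hn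
      have := Nat.cast_nonneg (α := ℝ) m
      have := Nat.cast_nonneg (α := ℝ) n
      linarith
    have hfne : (m.factorial : ℂ) ≠ 0 := by exact_mod_cast m.factorial_ne_zero
    field_simp
  rw [tsum_congr this]
  rw [Complex.exp_eq_exp_ℂ, NormedSpace.exp_eq_tsum_div]

theorem extBeta_neg_half_eq_choi (ξ₁ ξ₂ p q : ℂ)
    (h1 : 0 < ξ₁.re) (h2 : 0 < ξ₂.re) (hp : 0 < p.re) (hq : 0 < q.re) :
    extBeta (-(1/2)) p q ξ₁ ξ₂ =
      ∫ y in (0:ℝ)..1, (y : ℂ) ^ (ξ₁ - 1) * ((1 : ℂ) - (y : ℂ)) ^ (ξ₂ - 1) *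
        Complex.exp (-p / (y : ℂ) - q / (1 - (y : ℂ))) := by
  rw [extBeta]
  apply intervalIntegral.integral_congr
  intro y _
  simp only []
  rw [besselStruve_neg_half, besselStruve_neg_half, mul_assoc, ← Complex.exp_add]
  ring_nf
end

section
/- Let ξ₁, ξ₂, p, q be positive reals and η real with η > -1, and let f be the extended beta density f(y) = y^{ξ₁-1} (1-y)^{ξ₂-1} S_η(-p/y) S_η(-q/(1-y)) / B_η^{p,q}(ξ₁,ξ₂) on (0,1). Then for every real t, the moment generating function of this distribution satisfies M_X(t) = ∫₀¹ e^{ty} f(y) dy = (1 / B_η^{p,q}(ξ₁,ξ₂)) Σ_{n=0}^∞ B_η^{p,q}(ξ₁+n, ξ₂) t^n / n!. -/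
open MeasureTheory Complex

/-! Expanding `e^{ty} = ∑ (ty)^n / n!` and integrating termwise over `(0, 1]`, where `|y| ≤ 1`
makes `∑ |t|^n / n! · ∫ |w|` a dominating series, turns the moment generating function into the
series of moments `∫ y^n w(y) dy` of the weight `w`; and `y^n · y^(ξ₁-1) = y^(ξ₁+n-1)` identifies
the `n`-th moment with `B_η^{p,q}(ξ₁ + n, ξ₂)`. -/

open Nat in
theorem integral_cexp_mul_eq_tsum {μ : Measure ℝ} {w : ℝ → ℂ} {R : ℝ} (hw : Integrable w μ)
    (hR : ∀ᵐ y ∂μ, |y| ≤ R) (t : ℝ) :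
    ∫ y : ℝ, cexp (t * y) * w y ∂μ =
      ∑' n : ℕ, (t : ℂ) ^ n / n ! * ∫ y : ℝ, (y : ℂ) ^ n * w y ∂μ := by
  set F : ℕ → ℝ → ℂ := fun n y => (t : ℂ) ^ n / n ! * ((y : ℂ) ^ n * w y)
  have hmoment (n : ℕ) : Integrable (fun y : ℝ => (y : ℂ) ^ n * w y) μ :=
    hw.bdd_mul (by fun_prop) (hR.mono fun y hy => by
      simpa [norm_pow] using pow_le_pow_left₀ (abs_nonneg y) hy n)
  have hnorm_le (n : ℕ) : ∫ y, ‖F n y‖ ∂μ ≤ (|t| * R) ^ n / n ! * ∫ y, ‖w y‖ ∂μ := by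
    rw [← integral_const_mul]
    refine integral_mono_ae ((hmoment n).const_mul _).norm (hw.norm.const_mul _) ?_
    filter_upwards [hR] with y hy
    simp only [F, norm_mul, norm_div, norm_pow, Complex.norm_real, Complex.norm_natCast,
      Real.norm_eq_abs, mul_pow]
    have hpow : |y| ^ n ≤ R ^ n := pow_le_pow_left₀ (abs_nonneg y) hy n
    rw [div_mul_eq_mul_div, div_mul_eq_mul_div, mul_assoc]
    gcongr
  have hsum : Summable fun n => ∫ y, ‖F n y‖ ∂μ :=
    ((Real.summable_pow_div_factorial (|t| * R)).mul_right _).of_nonneg_of_le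
      (fun n => integral_nonneg fun y => norm_nonneg _) hnorm_le
  have hexp (y : ℝ) : cexp (t * y) * w y = ∑' n, F n y := by
    rw [Complex.exp_eq_exp_ℂ, NormedSpace.exp_eq_tsum_div, ← tsum_mul_right]
    exact tsum_congr fun n => by simp only [F, mul_pow]; ring
  rw [integral_congr_ae (ae_of_all _ hexp),
    ← integral_tsum_of_summable_integral_norm (fun n => (hmoment n).const_mul _) hsum]
  exact tsum_congr fun n => integral_const_mul _ _

noncomputable def extBetaWeight (η p q ξ₁ ξ₂ : ℂ) (y : ℝ) : ℂ :=
  (y : ℂ) ^ (ξ₁ - 1) * ((1 : ℂ) - (y : ℂ)) ^ (ξ₂ - 1) *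
    besselStruve η (-p / (y : ℂ)) * besselStruve η (-q / (1 - (y : ℂ)))

section ExtBeta

variable {η p q ξ₁ ξ₂ : ℂ}

theorem extBetaWeight_add_nat {y : ℝ} (hy : y ≠ 0) (n : ℕ) :
    extBetaWeight η p q (ξ₁ + n) ξ₂ y = (y : ℂ) ^ n * extBetaWeight η p q ξ₁ ξ₂ y := by
  rw [extBetaWeight, extBetaWeight, add_sub_right_comm,
    Complex.cpow_add _ _ (Complex.ofReal_ne_zero.2 hy), Complex.cpow_natCast]
  ring

theorem extBeta_add_nat (n : ℕ) :
    extBeta η p q (ξ₁ + n) ξ₂ =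
      ∫ y in Set.Ioc (0 : ℝ) 1, (y : ℂ) ^ n * extBetaWeight η p q ξ₁ ξ₂ y := by
  rw [extBeta, intervalIntegral.integral_of_le zero_le_one]
  exact setIntegral_congr_fun measurableSet_Ioc fun y hy => extBetaWeight_add_nat hy.1.ne' n

-- A non-integrable weight would make `extBeta` the junk value `0`.
theorem integrableOn_extBetaWeight_of_extBeta_ne_zero (h : extBeta η p q ξ₁ ξ₂ ≠ 0) :
    IntegrableOn (extBetaWeight η p q ξ₁ ξ₂) (Set.Ioc 0 1) :=
  (intervalIntegrable_iff_integrableOn_Ioc_of_le zero_le_one).1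
    (not_imp_comm.1 intervalIntegral.integral_undef h)

end ExtBeta

theorem extBeta_mgf_general (ξ₁ ξ₂ p q η : ℝ) (t : ℝ) :
    (∫ y in (0:ℝ)..1, Complex.exp ((t : ℂ) * (y : ℂ)) *
        ((y : ℂ) ^ ((ξ₁ : ℂ) - 1) * ((1 : ℂ) - (y : ℂ)) ^ ((ξ₂ : ℂ) - 1) *
          besselStruve (η : ℂ) (-(p : ℂ) / (y : ℂ)) *
          besselStruve (η : ℂ) (-(q : ℂ) / (1 - (y : ℂ))) /
          extBeta (η : ℂ) (p : ℂ) (q : ℂ) (ξ₁ : ℂ) (ξ₂ : ℂ))) =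
      (1 / extBeta (η : ℂ) (p : ℂ) (q : ℂ) (ξ₁ : ℂ) (ξ₂ : ℂ)) *
        ∑' n : ℕ, extBeta (η : ℂ) (p : ℂ) (q : ℂ) ((ξ₁ : ℂ) + n) (ξ₂ : ℂ) *
          (t : ℂ) ^ n / (n.factorial : ℂ) := by
  set B := extBeta η p q ξ₁ ξ₂
  set w := extBetaWeight η p q ξ₁ ξ₂
  rcases eq_or_ne B 0 with hB | hB
  · simp [hB]
  have hw : IntegrableOn w (Set.Ioc 0 1) := integrableOn_extBetaWeight_of_extBeta_ne_zero hB
  have hbounded : ∀ᵐ y ∂(volume.restrict (Set.Ioc (0 : ℝ) 1)), |y| ≤ 1 :=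
    ae_restrict_of_forall_mem measurableSet_Ioc fun y hy => abs_le.2 ⟨by linarith [hy.1], hy.2⟩
  calc ∫ y in (0 : ℝ)..1, cexp (t * y) * (w y / B)
      = (∫ y in Set.Ioc (0 : ℝ) 1, cexp (t * y) * w y) / B := by
        rw [intervalIntegral.integral_of_le zero_le_one, ← integral_div]
        simp only [mul_div_assoc]
    _ = _ := by
        rw [integral_cexp_mul_eq_tsum hw hbounded, div_eq_inv_mul, one_div]
        simp only [extBeta_add_nat]
        exact congrArg _ (tsum_congr fun n => by ring)

theorem extBeta_mgf (ξ₁ ξ₂ p q η : ℝ)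
    (h1 : 0 < ξ₁) (h2 : 0 < ξ₂) (hp : 0 < p) (hq : 0 < q) (hη : -1 < η) (t : ℝ) :
    (∫ y in (0:ℝ)..1, Complex.exp ((t : ℂ) * (y : ℂ)) *
        ((y : ℂ) ^ ((ξ₁ : ℂ) - 1) * ((1 : ℂ) - (y : ℂ)) ^ ((ξ₂ : ℂ) - 1) *
          besselStruve (η : ℂ) (-(p : ℂ) / (y : ℂ)) *
          besselStruve (η : ℂ) (-(q : ℂ) / (1 - (y : ℂ))) /
          extBeta (η : ℂ) (p : ℂ) (q : ℂ) (ξ₁ : ℂ) (ξ₂ : ℂ))) =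
      (1 / extBeta (η : ℂ) (p : ℂ) (q : ℂ) (ξ₁ : ℂ) (ξ₂ : ℂ)) *
        ∑' n : ℕ, extBeta (η : ℂ) (p : ℂ) (q : ℂ) ((ξ₁ : ℂ) + n) (ξ₂ : ℂ) *
          (t : ℂ) ^ n / (n.factorial : ℂ) :=
  extBeta_mgf_general ξ₁ ξ₂ p q η t
end
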